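/- arXiv:0807.1455 — 5 statements merged into one kernel-verified Lean document; each statement's English description precedes it below -/
import Mathlib

section
/- Let α ∈ 𝕋 = ℝ/ℤ, n ∈ ℕ with n ≥ 1, and d < 1/3. If ‖α‖ ≤ d, ‖2α‖ ≤ d, …, ‖nα‖ ≤ d, then ‖α‖ ≤ d/n. -/
/-!
Lift `α` to a real number `a` with `|a| ≤ 1/2`, so that `‖α‖ = |a|`, and show `k |a| ≤ d` by
induction on `k ≤ n`. Going from `k` to `k + 1` the real number `t = (k + 1) |a|` is at most
`2d < 2/3`, so its distance to the nearest integer is either `t` itself or `1 - t > 1/3 > d`;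
the hypothesis `‖(k + 1) α‖ ≤ d` rules out the second case.
-/

namespace AddCircle

variable {p : ℝ}

theorem exists_coe_eq_and_norm_eq_abs (α : AddCircle p) :
    ∃ a : ℝ, (a : AddCircle p) = α ∧ ‖α‖ = |a| := by
  obtain ⟨x, rfl⟩ := QuotientAddGroup.mk_surjective α
  refine ⟨x - round (p⁻¹ * x) * p, ?_, norm_eq p⟩
  rw [coe_sub, ← zsmul_eq_mul, coe_zsmul, coe_period, smul_zero, sub_zero]

theorem norm_coe_abs (x : ℝ) : ‖((|x| : ℝ) : AddCircle p)‖ = ‖(x : AddCircle p)‖ := by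
  rcases abs_cases x with ⟨hx, -⟩ | ⟨hx, -⟩ <;> simp [hx]

theorem norm_coe_eq_period_sub (hp : 0 < p) {x : ℝ} (hx₁ : p / 2 ≤ x) (hx₂ : x ≤ p) :
    ‖(x : AddCircle p)‖ = p - x := by
  have hx : (x : AddCircle p) = ((x - p : ℝ) : AddCircle p) := by
    rw [coe_sub, coe_period, sub_zero]
  have hxp : |x - p| ≤ |p| / 2 := by
    rw [abs_of_pos hp, abs_le]
    constructor <;> linarith
  rw [hx, (norm_coe_eq_abs_iff p hp.ne').2 hxp, abs_of_nonpos (by linarith), neg_sub]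

theorem abs_le_of_norm_coe_le {x d : ℝ} (hd : d < p / 3) (hx : |x| ≤ 2 * d)
    (h : ‖(x : AddCircle p)‖ ≤ d) : |x| ≤ d := by
  have hp : 0 < p := by linarith [norm_nonneg (x : AddCircle p)]
  rw [← norm_coe_abs] at h
  by_contra! hlt
  rcases le_or_gt |x| (p / 2) with hx' | hx'
  · rw [(norm_coe_eq_abs_iff p hp.ne').2 (by rwa [abs_abs, abs_of_pos hp]), abs_abs] at h
    linarith
  · rw [norm_coe_eq_period_sub hp hx'.le (by linarith)] at h
    linarith

theorem natCast_mul_abs_le_of_forall_norm_nsmul_le {n : ℕ} {a d : ℝ} (hd₀ : 0 ≤ d)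
    (hd : d < p / 3) (ha : ‖(a : AddCircle p)‖ = |a|)
    (h : ∀ k : ℕ, 1 ≤ k → k ≤ n → ‖k • (a : AddCircle p)‖ ≤ d) :
    ∀ k ≤ n, k * |a| ≤ d := by
  intro k
  induction k with
  | zero => simpa using hd₀
  | succ k ih =>
    intro hk
    have ha_le : |a| ≤ d := ha ▸ by simpa using h 1 le_rfl (by omega)
    have hk_le : k * |a| ≤ d := ih (by omega)
    have hnorm : ‖(((k + 1 : ℕ) * a : ℝ) : AddCircle p)‖ ≤ d := by
      rw [← nsmul_eq_mul, coe_nsmul]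
      exact h (k + 1) (by omega) hk
    rw [← Nat.abs_cast, ← abs_mul]
    refine abs_le_of_norm_coe_le hd ?_ hnorm
    rw [abs_mul, Nat.abs_cast]
    push_cast
    linarith

end AddCircle

/-- If `‖kα‖ ≤ d < 1/3` for `k = 1, …, n`, then `‖α‖ ≤ d/n`. -/
theorem stmt_2 (α : AddCircle (1 : ℝ)) (n : ℕ) (hn : 1 ≤ n) (d : ℝ)
    (hd0 : 0 ≤ d) (hd : d < 1 / 3)
    (h : ∀ k : ℕ, 1 ≤ k → k ≤ n → ‖k • α‖ ≤ d) :
    ‖α‖ ≤ d / n := by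
  obtain ⟨a, rfl, hnorm⟩ := α.exists_coe_eq_and_norm_eq_abs
  rw [hnorm, le_div_iff₀ (by exact_mod_cast hn), mul_comm]
  exact AddCircle.natCast_mul_abs_le_of_forall_norm_nsmul_le hd0 hd hnorm h n le_rfl
end

section
/- Suppose every countable subgroup of 𝕋 admits a characterizing sequence, i.e., for every countable G ≤ 𝕋 there is A ⊆ ℕ with {β ∈ 𝕋 : lim_{n∈A,n→∞} ‖nβ‖ = 0} = G. Then every subgroup G of 𝕋 is characterized by a filter: there exists a filter F on ℕ such that for all β ∈ 𝕋, β ∈ G if and only if {n : ‖nβ‖ ≤ ε} ∈ F for all ε > 0. -/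
/-!
Take for `F` the coarsest filter along which `n • γ → 0` for every `γ ∈ G`. If `n • β → 0`
along `F`, then, the neighbourhood filter of `0` being countably generated, `n • β → 0` already
along the infimum over a countable set `T ⊆ G`. The subgroup `H` generated by `T` is countable,
so it has a characterizing sequence `A`; every `γ ∈ T` converges along `A`, hence so does `β`,
and therefore `β ∈ H ≤ G`.
-/

open Filter Set Topology

theorem AddSubgroup.countable_closure {A : Type*} [AddGroup A] {s : Set A} (hs : s.Countable) :
    (AddSubgroup.closure s : Set A).Countable := by
  have := hs.to_subtype
  rw [FreeAddGroup.closure_eq_range, AddMonoidHom.coe_range]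
  exact countable_range _

theorem Filter.exists_countable_tendsto_iInf {α β ι : Type*} {f : α → β} {l : ι → Filter α}
    {lb : Filter β} [lb.IsCountablyGenerated] (h : Tendsto f (⨅ i, l i) lb) :
    ∃ T : Set ι, T.Countable ∧ Tendsto f (⨅ i ∈ T, l i) lb := by
  obtain ⟨x, hx⟩ := lb.exists_antitone_basis
  have hmem k : ∃ t : Finset ι, f ⁻¹' x k ∈ ⨅ i ∈ t, l i :=
    (mem_iInf_finite _).1 (h (hx.mem k))
  choose t ht using hmem
  refine ⟨⋃ k, t k, countable_iUnion fun k => (t k).countable_toSet, ?_⟩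
  refine hx.tendsto_right_iff.2 fun k _ => ?_
  exact le_def.1 (biInf_mono (subset_iUnion (fun k => (t k : Set ι)) k)) _ (ht k)

theorem tendsto_nhds_zero_iff_forall_norm_le {α E : Type*} [SeminormedAddGroup E] {f : α → E}
    {l : Filter α} : Tendsto f l (𝓝 0) ↔ ∀ ε > 0, {a | ‖f a‖ ≤ ε} ∈ l := by
  simp only [Metric.nhds_basis_closedBall.tendsto_right_iff, Metric.mem_closedBall,
    dist_zero_right]
  rfl

/-- If every countable subgroup of `𝕋` admits a characterizing sequence, then every
subgroup of `𝕋` is characterized by a filter on `ℕ`. -/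
theorem stmt_6
    (h : ∀ G : AddSubgroup (AddCircle (1 : ℝ)), (G : Set (AddCircle (1 : ℝ))).Countable →
      ∃ A : Set ℕ,
        {β : AddCircle (1 : ℝ) | Filter.Tendsto (fun n : ℕ => ‖n • β‖)
          (Filter.atTop ⊓ Filter.principal A) (nhds 0)} = (G : Set (AddCircle (1 : ℝ)))) :
    ∀ G : AddSubgroup (AddCircle (1 : ℝ)),
      ∃ F : Filter ℕ, ∀ β : AddCircle (1 : ℝ),
        β ∈ G ↔ ∀ ε : ℝ, 0 < ε → {n : ℕ | ‖n • β‖ ≤ ε} ∈ F := by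
  intro G
  refine ⟨⨅ γ : G, comap (· • (γ : AddCircle (1 : ℝ))) (𝓝 0), fun β => ?_⟩
  rw [← tendsto_nhds_zero_iff_forall_norm_le]
  refine ⟨fun hβ => tendsto_iInf' ⟨β, hβ⟩ tendsto_comap, fun hβ => ?_⟩
  obtain ⟨T, hT, hβT⟩ := exists_countable_tendsto_iInf hβ
  set H := AddSubgroup.closure (Subtype.val '' T)
  have hHG : H ≤ G := AddSubgroup.closure_le _ |>.2 (by rintro _ ⟨γ, -, rfl⟩; exact γ.2)
  obtain ⟨A, hA⟩ := h H (AddSubgroup.countable_closure (hT.image _))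
  simp_rw [← tendsto_zero_iff_norm_tendsto_zero] at hA
  have hT_tendsto (γ : G) (hγ : γ ∈ T) :
      Tendsto (· • (γ : AddCircle (1 : ℝ))) (atTop ⊓ 𝓟 A) (𝓝 0) :=
    hA.symm.subset (AddSubgroup.subset_closure ⟨γ, hγ, rfl⟩)
  have hβA : β ∈ {β | Tendsto (· • β) (atTop ⊓ 𝓟 A) (𝓝 0)} :=
    hβT.mono_left (le_iInf₂ fun γ hγ => (hT_tendsto γ hγ).le_comap)
  exact hHG (hA.subset hβA)
end

section
/- Let α₁, …, α_t ∈ 𝕋 and ε > 0. The set {β ∈ 𝕋 : ‖nβ‖ ≤ 1/6 for all n in the Bohr set H_ε(α₁,…,α_t)} is finite, and there exists a positive integer M such that this set is contained in ⟨α₁,…,α_t⟩_M = {k₁α₁ + ⋯ + k_tα_t : |k₁|,…,|k_t| ≤ M}. -/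
/-!
Fix `s = t + 1` and a large `m`, let `D(y) = ∑_{i<m} e(i y)` and weight each `n` by
`w(n) = ∏ⱼ |D(n αⱼ)|^{2s} ≥ 0`. Expanding the product, `w(n) = ∑_p e(n θ_p)` where each
`θ_p = ∑ⱼ kⱼ αⱼ` has integer coefficients `|kⱼ| ≤ s m`. Averaging over `n`, the mean of
`w(n) e(n β)` counts the `p` with `θ_p + β = 0`, while the mean of `w(n)` counts the `p` with
`θ_p = 0`, which by Cauchy–Schwarz is at least `(m^{2s} / s m)^t`. On the Bohr set
`Re e(n β) ≥ 1/2`; off it some `‖n αⱼ‖ > ε`, so `|D(n αⱼ)| ≤ 1/(2ε)` and `w(n)` is small compared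
to that count. Hence some `θ_p + β` vanishes, and `β = -θ_p` is a bounded combination of the `αⱼ`.
-/

open Finset Filter Topology Real ComplexConjugate

lemma norm_geom_sum_mul_norm_sub_one_le {z : ℂ} (hz : ‖z‖ = 1) (N : ℕ) :
    ‖∑ i ∈ range N, z ^ i‖ * ‖z - 1‖ ≤ 2 := by
  rw [← norm_mul, geom_sum_mul]
  calc ‖z ^ N - 1‖ ≤ ‖z ^ N‖ + ‖(1 : ℂ)‖ := norm_sub_le _ _
    _ = 2 := by rw [norm_pow, hz]; norm_num

lemma card_sq_le_card_mul_card_filter_eq {α β : Type*} [Fintype α] [DecidableEq β] (f : α → β)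
    (T : Finset β) (hf : ∀ a, f a ∈ T) :
    Fintype.card α ^ 2 ≤ #T * #{q : α × α | f q.1 = f q.2} := by
  have hfiber (b : β) : #{q : α × α | f q.1 = f q.2 ∧ f q.1 = b} = #{a | f a = b} ^ 2 := by
    rw [sq, ← card_product]
    congr 1
    ext q
    simp only [mem_filter, mem_univ, true_and, mem_product]
    constructor
    · rintro ⟨h, rfl⟩; exact ⟨rfl, h.symm⟩
    · rintro ⟨h1, h2⟩; exact ⟨h1.trans h2.symm, h1⟩
  calc Fintype.card α ^ 2 = (∑ b ∈ T, #{a | f a = b}) ^ 2 := by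
        rw [← card_univ, card_eq_sum_card_fiberwise fun a _ ↦ hf a]
    _ ≤ #T * ∑ b ∈ T, #{a | f a = b} ^ 2 := sq_sum_le_card_mul_sum_sq
    _ = #T * #{q : α × α | f q.1 = f q.2} := by
        rw [card_eq_sum_card_fiberwise (f := fun q : α × α ↦ f q.1) fun q _ ↦ hf q.1]
        simp_rw [filter_filter, hfiber]

lemma prod_mul_le_mul_pow {ι : Type*} [Fintype ι] {f : ι → ℝ} {a b : ℝ} (hf0 : ∀ i, 0 ≤ f i)
    (hfa : ∀ i, f i ≤ a) {j : ι} (hj : f j ≤ b) : (∏ i, f i) * a ≤ b * a ^ Fintype.card ι := by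
  classical
  have ha : 0 ≤ a := (hf0 j).trans (hfa j)
  calc (∏ i, f i) * a = f j * (a * ∏ i ∈ univ.erase j, f i) := by
        rw [← mul_prod_erase univ f (mem_univ j)]; ring
    _ ≤ b * (a * ∏ _i ∈ univ.erase j, a) := by
        gcongr
        · exact mul_nonneg ha (prod_nonneg fun i _ ↦ hf0 i)
        · exact (hf0 j).trans hj
        · exact fun i _ ↦ hf0 i
        · exact hfa _
    _ = b * a ^ Fintype.card ι := by
        rw [mul_prod_erase univ (fun _ ↦ a) (mem_univ j), prod_const, card_univ]

lemma finite_setOf_eq_sum_zsmul {G ι : Type*} [AddCommGroup G] [Fintype ι] [DecidableEq ι]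
    (α : ι → G) (M : ℕ) :
    {x : G | ∃ k : ι → ℤ, (∀ j, |k j| ≤ (M : ℤ)) ∧ x = ∑ j, k j • α j}.Finite := by
  refine ((Set.finite_Icc (-fun _ ↦ (M : ℤ)) fun _ ↦ (M : ℤ)).image
    fun k : ι → ℤ ↦ ∑ j, k j • α j).subset ?_
  rintro x ⟨k, hk, rfl⟩
  exact ⟨k, ⟨fun j ↦ (abs_le.1 (hk j)).1, fun j ↦ (abs_le.1 (hk j)).2⟩, rfl⟩

lemma three_mul_lt_pow {B : ℝ} {t m : ℕ} (hm : 3 * B ^ (2 * (t + 1)) * (t + 1) ^ t < m) :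
    3 * B ^ (2 * (t + 1)) * ((t + 1) * m) ^ t < (m : ℝ) ^ (2 * (t + 1)) := by
  have hB : 0 ≤ B ^ (2 * (t + 1)) := by rw [pow_mul]; positivity
  have hm1 : (1 : ℝ) ≤ m := by
    have : (0 : ℝ) < m := lt_of_le_of_lt (by positivity) hm
    exact_mod_cast this
  calc 3 * B ^ (2 * (t + 1)) * ((t + 1) * m) ^ t = 3 * B ^ (2 * (t + 1)) * (t + 1) ^ t * m ^ t := by
        rw [mul_pow]; ring
    _ < m * m ^ t := by gcongr
    _ ≤ m ^ (t + 2) * m ^ t := by gcongr; exact le_self_pow₀ hm1 (by omega)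
    _ = m ^ (2 * (t + 1)) := by ring

namespace UnitAddCircle

noncomputable def e : AddChar UnitAddCircle ℂ :=
  Circle.coeHom.compAddChar AddCircle.toCircle_addChar

lemma e_apply (y : UnitAddCircle) : e y = AddCircle.toCircle y := rfl

lemma norm_e (y : UnitAddCircle) : ‖e y‖ = 1 := Circle.norm_coe _

lemma e_eq_one_iff {y : UnitAddCircle} : e y = 1 ↔ y = 0 := by
  rw [e_apply, Circle.coe_eq_one, ← AddCircle.toCircle_zero]
  exact (AddCircle.injective_toCircle one_ne_zero).eq_iff

lemma conj_e (y : UnitAddCircle) : conj (e y) = e (-y) := by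
  rw [AddChar.map_neg_eq_inv, e_apply, ← Circle.coe_inv_eq_conj, Circle.coe_inv]

lemma e_sum {ι : Type*} (s : Finset ι) (f : ι → UnitAddCircle) :
    e (∑ i ∈ s, f i) = ∏ i ∈ s, e (f i) := by
  classical
  induction s using Finset.induction_on with
  | empty => simp
  | insert i s hi ih => rw [sum_insert hi, prod_insert hi, AddChar.map_add_eq_mul, ih]

lemma exists_coe_eq_and_abs_eq_norm (y : UnitAddCircle) :
    ∃ x : ℝ, (x : UnitAddCircle) = y ∧ |x| = ‖y‖ := by
  induction y using QuotientAddGroup.induction_on with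
  | H x =>
    refine ⟨x - round x, ?_, ?_⟩
    · rw [AddCircle.coe_sub, sub_eq_self, AddCircle.coe_eq_zero_iff]
      exact ⟨round x, by simp⟩
    · rw [UnitAddCircle.norm_eq]

lemma e_coe (x : ℝ) : e x = Complex.exp (↑(2 * π * x) * Complex.I) := by
  rw [e_apply, AddCircle.toCircle_apply_mk, Circle.coe_exp]
  simp

lemma re_e (y : UnitAddCircle) : (e y).re = cos (2 * π * ‖y‖) := by
  obtain ⟨x, rfl, hx⟩ := exists_coe_eq_and_abs_eq_norm y
  rw [e_coe, Complex.exp_ofReal_mul_I_re, ← hx, ← cos_abs (2 * π * x), abs_mul,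
    abs_of_pos two_pi_pos]

lemma norm_e_sub_one (y : UnitAddCircle) : ‖e y - 1‖ = 2 * sin (π * ‖y‖) := by
  obtain ⟨x, rfl, hx⟩ := exists_coe_eq_and_abs_eq_norm y
  rw [e_coe, mul_comm, Complex.norm_exp_I_mul_ofReal_sub_one, ← hx, norm_mul, Real.norm_two,
    show 2 * π * x / 2 = π * x by ring, Real.norm_eq_abs]
  have hx2 : |x| ≤ 1 / 2 := hx ▸ (AddCircle.norm_le_half_period _ one_ne_zero).trans_eq (by simp)
  have hsin : 0 ≤ sin (π * |x|) :=
    sin_nonneg_of_nonneg_of_le_pi (by positivity) (by nlinarith [pi_pos])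
  rw [← abs_of_nonneg hsin]
  rcases abs_cases x with ⟨h, -⟩ | ⟨h, -⟩ <;> simp [h, sin_neg]

lemma half_le_re_e {y : UnitAddCircle} (hy : ‖y‖ ≤ 1 / 6) : 1 / 2 ≤ (e y).re := by
  rw [re_e, ← cos_pi_div_three]
  exact cos_le_cos_of_nonneg_of_le_pi (by positivity) (by linarith [pi_pos]) (by nlinarith [pi_pos])

lemma four_mul_norm_le_norm_e_sub_one (y : UnitAddCircle) : 4 * ‖y‖ ≤ ‖e y - 1‖ := by
  have hy : ‖y‖ ≤ 1 / 2 := (AddCircle.norm_le_half_period _ one_ne_zero).trans_eq (by simp)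
  have := mul_le_sin (x := π * ‖y‖) (by positivity) (by nlinarith [pi_pos])
  rw [norm_e_sub_one, ← mul_assoc, div_mul_cancel₀ _ pi_ne_zero] at *
  linarith

lemma tendsto_average_e_nsmul (y : UnitAddCircle) :
    Tendsto (fun N : ℕ ↦ (N : ℂ)⁻¹ * ∑ n ∈ range N, e (n • y)) atTop
      (𝓝 (if y = 0 then 1 else 0)) := by
  split_ifs with hy
  · refine tendsto_const_nhds.congr' ?_
    filter_upwards [eventually_ne_atTop 0] with N hN
    simp [hy, hN]
  · have hd : 0 < ‖e y - 1‖ := norm_pos_iff.2 (sub_ne_zero.2 (mt e_eq_one_iff.1 hy))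
    refine squeeze_zero_norm (fun N ↦ ?_)
      (by simpa using tendsto_inv_atTop_nhds_zero_nat.mul_const (2 / ‖e y - 1‖))
    simp_rw [AddChar.map_nsmul_eq_pow, norm_mul, norm_inv, Complex.norm_natCast]
    gcongr
    exact (le_div_iff₀ hd).2 (norm_geom_sum_mul_norm_sub_one_le (norm_e y) N)

open scoped Classical in
lemma tendsto_average_sum_e_nsmul {P : Type*} [Fintype P] (θ : P → UnitAddCircle) :
    Tendsto (fun N : ℕ ↦ (N : ℂ)⁻¹ * ∑ n ∈ range N, ∑ p, e (n • θ p)) atTop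
      (𝓝 (#{p | θ p = 0} : ℂ)) := by
  have := tendsto_finsetSum univ fun p _ ↦ tendsto_average_e_nsmul (θ p)
  rw [sum_boole] at this
  exact this.congr fun N ↦ by rw [sum_comm, mul_sum]

open scoped Classical in
theorem card_div_two_sub_le_card {P : Type*} [Fintype P] (θ : P → UnitAddCircle)
    (β : UnitAddCircle)    (w : ℕ → ℝ) (hw : ∀ n : ℕ, (w n : ℂ) = ∑ p, e (n • θ p)) {c : ℝ}
    (h : ∀ n : ℕ, w n / 2 - c ≤ w n * (e (n • β)).re) :
    (#{p | θ p = 0} : ℝ) / 2 - c ≤ #{p | θ p + β = 0} := by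
  have hre {f : ℕ → ℂ} {k : ℕ} (hf : Tendsto f atTop (𝓝 k)) :
      Tendsto (fun N ↦ (f N).re) atTop (𝓝 k) :=
    (Complex.continuous_re.tendsto _).comp hf
  have h0 := hre (tendsto_average_sum_e_nsmul θ)
  have hβ := hre (tendsto_average_sum_e_nsmul (θ · + β))
  simp_rw [← hw] at h0
  simp_rw [nsmul_add, AddChar.map_add_eq_mul, ← sum_mul, ← hw] at hβ
  refine le_of_tendsto_of_tendsto ((h0.div_const 2).sub_const c) hβ ?_
  filter_upwards [eventually_ne_atTop 0] with N hN
  have hN' : ((N : ℂ))⁻¹ = ((N⁻¹ : ℝ) : ℂ) := by push_cast; rfl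
  simp only [hN', Complex.re_ofReal_mul, Complex.re_sum, Complex.ofReal_re]
  calc ((N : ℝ)⁻¹ * ∑ n ∈ range N, w n) / 2 - c = (N : ℝ)⁻¹ * ∑ n ∈ range N, (w n / 2 - c) := by
        rw [sum_sub_distrib, ← sum_div, sum_const, card_range, nsmul_eq_mul]
        field_simp
    _ ≤ (N : ℝ)⁻¹ * ∑ n ∈ range N, w n * (e (n • β)).re := by gcongr with n; exact h n

noncomputable def dirichletSum (m : ℕ) (y : UnitAddCircle) : ℂ := ∑ i : Fin m, e ((i : ℕ) • y)

lemma norm_dirichletSum_le (m : ℕ) (y : UnitAddCircle) : ‖dirichletSum m y‖ ≤ m :=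
  (norm_sum_le _ _).trans (by simp [norm_e])

lemma norm_dirichletSum_mul_norm_le (m : ℕ) (y : UnitAddCircle) :
    ‖dirichletSum m y‖ * ‖y‖ ≤ 1 / 2 := by
  have hgeom : ‖dirichletSum m y‖ * ‖e y - 1‖ ≤ 2 := by
    simpa [dirichletSum, Fin.sum_univ_eq_sum_range (fun i ↦ e y ^ i), AddChar.map_nsmul_eq_pow]
      using norm_geom_sum_mul_norm_sub_one_le (norm_e y) m
  nlinarith [four_mul_norm_le_norm_e_sub_one y, norm_nonneg (dirichletSum m y)]

def digitSum {s m : ℕ} (v : Fin s → Fin m) : ℕ := ∑ l, (v l : ℕ)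

def freq {s m : ℕ} (q : (Fin s → Fin m) × (Fin s → Fin m)) : ℤ := digitSum q.1 - digitSum q.2

lemma dirichletSum_pow (m s : ℕ) (y : UnitAddCircle) :
    dirichletSum m y ^ s = ∑ v : Fin s → Fin m, e (digitSum v • y) := by
  rw [dirichletSum, ← Fin.prod_const, Fintype.prod_sum]
  refine sum_congr rfl fun v _ ↦ ?_
  rw [digitSum, sum_smul, e_sum]

lemma norm_dirichletSum_pow (m s : ℕ) (y : UnitAddCircle) :
    ((‖dirichletSum m y‖ ^ (2 * s) : ℝ) : ℂ) =
      ∑ q : (Fin s → Fin m) × (Fin s → Fin m), e (freq q • y) := by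
  rw [Complex.ofReal_pow, pow_mul, ← Complex.mul_conj', mul_pow,
    ← map_pow, dirichletSum_pow, map_sum, sum_mul_sum, ← Fintype.sum_prod_type']
  refine sum_congr rfl fun q _ ↦ ?_
  rw [conj_e, ← AddChar.map_add_eq_mul, freq, sub_smul, natCast_zsmul, natCast_zsmul,
    sub_eq_add_neg]

lemma digitSum_lt {s m : ℕ} (hs : 0 < s) (v : Fin s → Fin m) : digitSum v < s * m := by
  calc digitSum v < ∑ _l : Fin s, m :=
        sum_lt_sum_of_nonempty (univ_nonempty_iff.2 ⟨⟨0, hs⟩⟩) fun l _ ↦ (v l).isLt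
    _ = s * m := by simp

lemma abs_freq_le {s m : ℕ} (q : (Fin s → Fin m) × (Fin s → Fin m)) : |freq q| ≤ s * m := by
  rcases Nat.eq_zero_or_pos s with rfl | hs
  · simp [freq, digitSum]
  have h1 := digitSum_lt hs q.1
  have h2 := digitSum_lt hs q.2
  rw [freq, abs_le]
  constructor <;> omega

lemma pow_le_mul_card_filter_freq_eq_zero {s : ℕ} (hs : 0 < s) (m : ℕ) :
    m ^ (2 * s) ≤ s * m * #{q : (Fin s → Fin m) × (Fin s → Fin m) | freq q = 0} := by
  have := card_sq_le_card_mul_card_filter_eq digitSum (range (s * m))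
    fun v ↦ mem_range.2 (digitSum_lt hs v)
  simpa [freq, sub_eq_zero, pow_mul'] using this

section BohrKernel

variable {t : ℕ} (α : Fin t → UnitAddCircle) (s m : ℕ)

def kernelFreq (p : Fin t → (Fin s → Fin m) × (Fin s → Fin m)) : UnitAddCircle :=
  ∑ j, freq (p j) • α j

noncomputable def bohrKernel (n : ℕ) : ℝ := ∏ j, ‖dirichletSum m (n • α j)‖ ^ (2 * s)

lemma bohrKernel_nonneg (n : ℕ) : 0 ≤ bohrKernel α s m n := by
  unfold bohrKernel; positivity

lemma bohrKernel_eq_sum (n : ℕ) :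
    (bohrKernel α s m n : ℂ) = ∑ p, e (n • kernelFreq α s m p) := by
  rw [bohrKernel, Complex.ofReal_prod]
  simp_rw [norm_dirichletSum_pow, Fintype.prod_sum, kernelFreq, smul_sum, e_sum, smul_comm n]

lemma bohrKernel_mul_le {ε : ℝ} (hε : 0 < ε) {n : ℕ} {j : Fin t} (hj : ε < ‖n • α j‖) :
    bohrKernel α s m n * (m : ℝ) ^ (2 * s) ≤ (1 / (2 * ε)) ^ (2 * s) * ((m : ℝ) ^ (2 * s)) ^ t := by
  have hD : ‖dirichletSum m (n • α j)‖ ≤ 1 / (2 * ε) := by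
    rw [le_div_iff₀ (by positivity)]
    nlinarith [norm_dirichletSum_mul_norm_le m (n • α j), norm_nonneg (dirichletSum m (n • α j))]
  simpa [bohrKernel] using prod_mul_le_mul_pow (fun i ↦ by positivity)
    (fun i ↦ pow_le_pow_left₀ (norm_nonneg _) (norm_dirichletSum_le m (n • α i)) (2 * s))
    (pow_le_pow_left₀ (norm_nonneg _) hD (2 * s))

open scoped Classical in
lemma pow_le_mul_card_kernelFreq_eq_zero (hs : 0 < s) :
    (m ^ (2 * s)) ^ t ≤ (s * m) ^ t * #{p | kernelFreq α s m p = 0} := by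
  calc (m ^ (2 * s)) ^ t ≤ (s * m * #{q : (Fin s → Fin m) × (Fin s → Fin m) | freq q = 0}) ^ t :=
        Nat.pow_le_pow_left (pow_le_mul_card_filter_freq_eq_zero hs m) t
    _ = (s * m) ^ t * #{p : Fin t → (Fin s → Fin m) × (Fin s → Fin m) | ∀ j, freq (p j) = 0} := by
        have hpi : ({p | ∀ j, freq (p j) = 0} : Finset (Fin t → (Fin s → Fin m) × (Fin s → Fin m)))
            = Fintype.piFinset fun _ ↦ {q | freq q = 0} := by
          ext p
          simp [Fintype.mem_piFinset]
        rw [hpi, Fintype.card_piFinset, prod_const, card_univ, Fintype.card_fin, mul_pow]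
    _ ≤ (s * m) ^ t * #{p | kernelFreq α s m p = 0} := by
        gcongr with p
        intro hp
        simp [kernelFreq, hp]

lemma bohrKernel_div_two_sub_le {ε : ℝ} (hε : 0 < ε) (hm : 0 < m) {β : UnitAddCircle}
    (hβ : ∀ n : ℕ, (∀ j, ‖n • α j‖ ≤ ε) → ‖n • β‖ ≤ 1 / 6) (n : ℕ) :
    bohrKernel α s m n / 2 -
        3 / 2 * ((1 / (2 * ε)) ^ (2 * s) * ((m : ℝ) ^ (2 * s)) ^ t / m ^ (2 * s))
      ≤ bohrKernel α s m n * (e (n • β)).re := by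
  have hw := bohrKernel_nonneg α s m n
  by_cases hgood : ∀ j, ‖n • α j‖ ≤ ε
  · have hC : 0 ≤ (1 / (2 * ε)) ^ (2 * s) * ((m : ℝ) ^ (2 * s)) ^ t / m ^ (2 * s) := by positivity
    nlinarith [half_le_re_e (hβ n hgood)]
  · obtain ⟨j, hj⟩ := not_forall.1 hgood
    have hwC := (le_div_iff₀ (by positivity)).2 (bohrKernel_mul_le α s m hε (not_le.1 hj))
    nlinarith [abs_le.1 ((Complex.abs_re_le_norm (e (n • β))).trans_eq (norm_e _))]

lemma exists_eq_sum_zsmul_of_kernelFreq_add_eq_zero {p : Fin t → (Fin s → Fin m) × (Fin s → Fin m)}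
    {β : UnitAddCircle} (hp : kernelFreq α s m p + β = 0) :
    ∃ k : Fin t → ℤ, (∀ j, |k j| ≤ ((s * m : ℕ) : ℤ)) ∧ β = ∑ j, k j • α j := by
  refine ⟨fun j ↦ -freq (p j), fun j ↦ by simpa using abs_freq_le (p j), ?_⟩
  rw [eq_neg_of_add_eq_zero_right hp, kernelFreq, ← sum_neg_distrib]
  simp [neg_smul]

end BohrKernel

theorem exists_forall_eq_sum_zsmul {t : ℕ} (α : Fin t → UnitAddCircle) {ε : ℝ} (hε : 0 < ε) :
    ∃ M : ℕ, 0 < M ∧ ∀ β : UnitAddCircle, (∀ n : ℕ, (∀ j, ‖n • α j‖ ≤ ε) → ‖n • β‖ ≤ 1 / 6) →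
      ∃ k : Fin t → ℤ, (∀ j, |k j| ≤ (M : ℤ)) ∧ β = ∑ j, k j • α j := by
  classical
  set s := t + 1
  set B : ℝ := 1 / (2 * ε)
  obtain ⟨m, hm⟩ := exists_nat_gt (3 * B ^ (2 * s) * (t + 1) ^ t)
  have hm0 : 0 < m := Nat.cast_pos.1 <| lt_of_le_of_lt (by rw [pow_mul]; positivity) hm
  refine ⟨s * m, by positivity, fun β hβ ↦ ?_⟩
  set X : ℝ := (m : ℝ) ^ (2 * s)
  set C : ℝ := B ^ (2 * s) * X ^ t / X
  have hcount : (#{p | kernelFreq α s m p = 0} : ℝ) / 2 - 3 / 2 * C ≤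
      #{p | kernelFreq α s m p + β = 0} :=
    card_div_two_sub_le_card _ β _ (bohrKernel_eq_sum α s m)
      (bohrKernel_div_two_sub_le α s m hε hm0 hβ)
  have hzero : X ^ t ≤ (s * m) ^ t * #{p | kernelFreq α s m p = 0} := by
    simp only [X]
    exact_mod_cast pow_le_mul_card_kernelFreq_eq_zero α s m (Nat.succ_pos t)
  have hC : 3 * C * (s * m) ^ t < X ^ t := by
    have hX : 0 < X := by positivity
    calc 3 * C * (s * m) ^ t = 3 * B ^ (2 * s) * ((t + 1) * m) ^ t * X ^ t / X := by
          simp only [C, s]; push_cast; ring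
      _ < X * X ^ t / X := by gcongr; exact three_mul_lt_pow hm
      _ = X ^ t := by field_simp
  have hpos : (0 : ℝ) < #{p | kernelFreq α s m p + β = 0} := by
    nlinarith [(by positivity : (0 : ℝ) < (s * m) ^ t)]
  obtain ⟨p, hp⟩ := card_pos.1 (Nat.cast_pos.1 hpos)
  exact exists_eq_sum_zsmul_of_kernelFreq_add_eq_zero α s m (mem_filter.1 hp).2

end UnitAddCircle

/-- The set `{β ∈ 𝕋 : ‖nβ‖ ≤ 1/6 for all n ∈ H_ε(α₁,…,α_t)}` is finite and contained in
`⟨α₁,…,α_t⟩_M` for some positive integer `M`. -/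
theorem stmt_8 (t : ℕ) (α : Fin t → AddCircle (1 : ℝ)) (ε : ℝ) (hε : 0 < ε) :
    {β : AddCircle (1 : ℝ) |
        ∀ n : ℕ, (∀ j, ‖n • α j‖ ≤ ε) → ‖n • β‖ ≤ 1 / 6}.Finite ∧
      ∃ M : ℕ, 0 < M ∧
        {β : AddCircle (1 : ℝ) |
            ∀ n : ℕ, (∀ j, ‖n • α j‖ ≤ ε) → ‖n • β‖ ≤ 1 / 6} ⊆
          {x : AddCircle (1 : ℝ) | ∃ k : Fin t → ℤ,
            (∀ j, |k j| ≤ (M : ℤ)) ∧ x = ∑ j, k j • α j} := by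
  obtain ⟨M, hM, hβ⟩ := UnitAddCircle.exists_forall_eq_sum_zsmul α hε
  exact ⟨(finite_setOf_eq_sum_zsmul α M).subset hβ, M, hM, hβ⟩
end

section
/- Let α₁,…,α_t ∈ 𝕋, ε > 0, M ∈ ℕ, and let V ⊇ ⟨α₁,…,α_t⟩_M be an open subset of 𝕋 such that {β ∈ 𝕋 : ‖βH_ε(α₁,…,α_t)‖ ≤ 1/6} ⊆ ⟨α₁,…,α_t⟩_M. Then there exists a positive integer N such that for all β ∈ 𝕋: if ‖nβ‖ ≤ 1/6 for all n in the finite Bohr set H_{N,ε}(α₁,…,α_t) = {n ≤ N : ‖nα_j‖ ≤ ε ∀j}, then β ∈ V. -/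
/-!
The sets `{β : ‖nβ‖ ≤ 1/6}` are closed, so the complement of `V` is a compact set missed by
the intersection of the closed sets `{β : n ∈ H_ε → ‖nβ‖ ≤ 1/6}` over all `n`. By compactness,
finitely many of them, hence those with `n ≤ N`, already miss it.
-/

open Set

theorem exists_biInter_le_subset_of_iInter_subset {X ι : Type*} [TopologicalSpace X]
    [CompactSpace X] [Preorder ι] [IsDirected ι (· ≤ ·)] [Nonempty ι] {Z : ι → Set X}
    (hZ : ∀ i, IsClosed (Z i)) {V : Set X} (hV : IsOpen V) (hZV : ⋂ i, Z i ⊆ V) :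
    ∃ N, ⋂ i ≤ N, Z i ⊆ V := by
  have hempty : Vᶜ ∩ ⋂ N, ⋂ i ≤ N, Z i = ∅ := by
    rwa [biInter_le_eq_iInter, ← disjoint_iff_inter_eq_empty, disjoint_compl_left_iff_subset]
  obtain ⟨N, hN⟩ := hV.isClosed_compl.isCompact.elim_directed_family_closed _
    (fun N ↦ isClosed_biInter fun i _ ↦ hZ i) hempty
    (directed_of_isDirected_le fun _ _ hMN ↦ iInter₂_mono' fun i hi ↦ ⟨i, le_trans hi hMN, le_rfl⟩)
  exact ⟨N, disjoint_compl_left_iff_subset.1 (disjoint_iff_inter_eq_empty.2 hN)⟩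

theorem isClosed_setOf_norm_nsmul_le {G : Type*} [SeminormedAddCommGroup G] (n : ℕ) (c : ℝ) :
    IsClosed {β : G | ‖n • β‖ ≤ c} :=
  isClosed_le (continuous_norm.comp (continuous_nsmul n)) continuous_const

theorem exists_forall_le_norm_nsmul_le_imp_mem {G : Type*} [SeminormedAddCommGroup G]
    [CompactSpace G] (S : Set ℕ) (c : ℝ) {V : Set G} (hV : IsOpen V)
    (hSV : ∀ β : G, (∀ n ∈ S, ‖n • β‖ ≤ c) → β ∈ V) :
    ∃ N : ℕ, ∀ β : G, (∀ n ∈ S, n ≤ N → ‖n • β‖ ≤ c) → β ∈ V := by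
  obtain ⟨N, hN⟩ := exists_biInter_le_subset_of_iInter_subset (Z := fun n ↦
      ⋂ (_ : n ∈ S), {β : G | ‖n • β‖ ≤ c})
    (fun n ↦ isClosed_iInter fun _ ↦ isClosed_setOf_norm_nsmul_le n c) hV
    (fun β hβ ↦ hSV β fun n hn ↦ mem_iInter.1 (mem_iInter.1 hβ n) hn)
  exact ⟨N, fun β hβ ↦ hN (mem_iInter₂.2 fun n hnN ↦ mem_iInter.2 fun hn ↦ hβ n hn hnN)⟩

theorem stmt_9_general (t : ℕ) (α : Fin t → AddCircle (1 : ℝ)) (ε : ℝ)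
    (M : ℕ) (V : Set (AddCircle (1 : ℝ))) (hV : IsOpen V)
    (hMV : {x : AddCircle (1 : ℝ) | ∃ k : Fin t → ℤ,
        (∀ j, |k j| ≤ (M : ℤ)) ∧ x = ∑ j, k j • α j} ⊆ V)
    (hHM : {β : AddCircle (1 : ℝ) |
        ∀ n : ℕ, (∀ j, ‖n • α j‖ ≤ ε) → ‖n • β‖ ≤ 1 / 6} ⊆
      {x : AddCircle (1 : ℝ) | ∃ k : Fin t → ℤ,
        (∀ j, |k j| ≤ (M : ℤ)) ∧ x = ∑ j, k j • α j}) :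
    ∃ N : ℕ, 0 < N ∧ ∀ β : AddCircle (1 : ℝ),
      (∀ n : ℕ, n ≤ N → (∀ j, ‖n • α j‖ ≤ ε) → ‖n • β‖ ≤ 1 / 6) → β ∈ V := by
  obtain ⟨N, hN⟩ := exists_forall_le_norm_nsmul_le_imp_mem {n | ∀ j, ‖n • α j‖ ≤ ε} (1 / 6) hV
    fun β hβ ↦ hMV (hHM hβ)
  exact ⟨N + 1, N.succ_pos, fun β hβ ↦ hN β fun n hn hnN ↦ hβ n (hnN.trans N.le_succ) hn⟩

/-- If `V ⊇ ⟨α₁,…,α_t⟩_M` is open and `{β : ‖βH_ε‖ ≤ 1/6} ⊆ ⟨α₁,…,α_t⟩_M`, then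
there is `N` such that `‖nβ‖ ≤ 1/6` for all `n ∈ H_{N,ε}` implies `β ∈ V`. -/
theorem stmt_9 (t : ℕ) (α : Fin t → AddCircle (1 : ℝ)) (ε : ℝ) (hε : 0 < ε)
    (M : ℕ) (V : Set (AddCircle (1 : ℝ))) (hV : IsOpen V)
    (hMV : {x : AddCircle (1 : ℝ) | ∃ k : Fin t → ℤ,
        (∀ j, |k j| ≤ (M : ℤ)) ∧ x = ∑ j, k j • α j} ⊆ V)
    (hHM : {β : AddCircle (1 : ℝ) |
        ∀ n : ℕ, (∀ j, ‖n • α j‖ ≤ ε) → ‖n • β‖ ≤ 1 / 6} ⊆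
      {x : AddCircle (1 : ℝ) | ∃ k : Fin t → ℤ,
        (∀ j, |k j| ≤ (M : ℤ)) ∧ x = ∑ j, k j • α j}) :
    ∃ N : ℕ, 0 < N ∧ ∀ β : AddCircle (1 : ℝ),
      (∀ n : ℕ, n ≤ N → (∀ j, ‖n • α j‖ ≤ ε) → ‖n • β‖ ≤ 1 / 6) → β ∈ V :=
  stmt_9_general t α ε M V hV hMV hHM
end

section
/- Let m ∈ ℕ, nonzero integers n₁,…,n_R, positive integers K₁,…,K_R, β ∈ 𝕋, and set S = {m + 2^l|n_i| : i ≤ R, 2^l ≤ 8K_iR}. Suppose d := sup{‖nβ‖ : n ∈ S} < 1/6. Then for each i ≤ R, ‖n_iβ‖ ≤ d/(K_iR). -/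
/-!
Put `α = |nᵢ|β`. Subtracting consecutive terms `mβ + 2^l α` of `S` gives `‖2^l α‖ ≤ 2d < 1/3`
whenever `2^(l+1) ≤ 8KᵢR`. On the circle, if `‖x‖` and `‖2x‖` are both below `1/3` then doubling
is exact, `‖2x‖ = 2‖x‖`: otherwise `‖x‖ > 1/4` and `2x` lies at distance at least `1/3` from `0`.
Iterating, `2^l ‖α‖ = ‖2^l α‖ ≤ 2d` for the largest admissible `l`, for which `2^(l-1) ≥ KᵢR`.
-/

namespace AddCircle

variable {p : ℝ}

theorem exists_coe_eq_abs_eq_norm (x : AddCircle p) :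
    ∃ s : ℝ, (s : AddCircle p) = x ∧ |s| = ‖x‖ := by
  obtain ⟨t, rfl⟩ := QuotientAddGroup.mk_surjective x
  refine ⟨t - round (p⁻¹ * t) * p, ?_, (norm_eq p).symm⟩
  rw [coe_sub, ← zsmul_eq_mul, coe_zsmul, coe_period, smul_zero, sub_zero]

theorem norm_coe_ge_of_lt_abs {y : ℝ} (hp : 0 < p) (hy₁ : p / 2 < |y|) (hy₂ : |y| ≤ 2 * p / 3) :
    p / 3 ≤ ‖(y : AddCircle p)‖ := by
  rw [norm_eq]
  rcases eq_or_ne (round (p⁻¹ * y)) 0 with hk | hk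
  · rw [hk, Int.cast_zero, zero_mul, sub_zero]; linarith
  · have : p ≤ |(round (p⁻¹ * y) : ℝ) * p| := by
      rw [abs_mul, abs_of_pos hp]
      have : (1 : ℝ) ≤ |(round (p⁻¹ * y) : ℝ)| := by exact_mod_cast Int.one_le_abs hk
      nlinarith
    have := abs_sub_abs_le_abs_sub ((round (p⁻¹ * y) : ℝ) * p) y
    rw [abs_sub_comm] at this
    linarith

theorem norm_two_nsmul_of_norm_lt (hp : 0 < p) {x : AddCircle p} (hx : ‖x‖ < p / 3)
    (h2x : ‖2 • x‖ < p / 3) : ‖2 • x‖ = 2 * ‖x‖ := by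
  obtain ⟨s, rfl, hs⟩ := exists_coe_eq_abs_eq_norm x
  have h2s : 2 • (s : AddCircle p) = ((2 * s : ℝ) : AddCircle p) := by
    rw [← coe_nsmul, nsmul_eq_mul, Nat.cast_ofNat]
  rw [h2s] at h2x ⊢
  have habs : |2 * s| = 2 * |s| := by rw [abs_mul, abs_two]
  by_cases hsmall : |2 * s| ≤ p / 2
  · rw [(norm_coe_eq_abs_iff p hp.ne').mpr (by rwa [abs_of_pos hp]), habs, hs]
  · have := norm_coe_ge_of_lt_abs hp (not_le.mp hsmall) (by linarith)
    linarith

theorem norm_two_pow_nsmul_of_norm_lt (hp : 0 < p) {x : AddCircle p} {k : ℕ}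
    (h : ∀ l ≤ k, ‖2 ^ l • x‖ < p / 3) : ‖2 ^ k • x‖ = 2 ^ k * ‖x‖ := by
  induction k with
  | zero => simp
  | succ k ih =>
    have hsucc : 2 ^ (k + 1) • x = 2 • 2 ^ k • x := by rw [pow_succ, mul_nsmul]
    rw [hsucc, norm_two_nsmul_of_norm_lt hp (h k k.le_succ) (hsucc ▸ h (k + 1) le_rfl),
      ih fun l hl => h l (hl.trans k.le_succ), pow_succ', mul_assoc]

theorem pow_mul_norm_le_of_norm_add_two_pow_nsmul_le (hp : 0 < p) {γ α : AddCircle p} {d : ℝ}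
    (hd : d < p / 6) {k : ℕ} (h : ∀ l ≤ k + 2, ‖γ + 2 ^ l • α‖ ≤ d) : 2 ^ k * ‖α‖ ≤ d := by
  have hgap : ∀ l ≤ k + 1, ‖2 ^ l • α‖ ≤ 2 * d := fun l hl => calc
    ‖2 ^ l • α‖ = ‖(γ + 2 ^ (l + 1) • α) - (γ + 2 ^ l • α)‖ := by
      congr 1; rw [pow_succ, mul_nsmul', two_nsmul, nsmul_add]; abel
    _ ≤ ‖γ + 2 ^ (l + 1) • α‖ + ‖γ + 2 ^ l • α‖ := norm_sub_le _ _
    _ ≤ 2 * d := by linarith [h l (by omega), h (l + 1) (by omega)]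
  have := norm_two_pow_nsmul_of_norm_lt hp fun l hl => (hgap l hl).trans_lt (by linarith)
  have hlast := hgap (k + 1) le_rfl
  rw [this, pow_succ, mul_right_comm] at hlast
  linarith

end AddCircle

theorem Nat.exists_le_two_pow_le_two_mul {N : ℕ} (hN : N ≠ 0) :
    ∃ k, N ≤ 2 ^ k ∧ 2 ^ k ≤ 2 * N :=
  ⟨Nat.log 2 N + 1, (Nat.lt_pow_succ_log_self one_lt_two N).le, by
    rw [pow_succ, mul_comm]; exact Nat.mul_le_mul_left 2 (Nat.pow_log_le_self 2 hN)⟩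

theorem stmt_17_general (m : ℕ) (R : ℕ)
    (n : Fin R → ℤ) (K : Fin R → ℕ) (hK : ∀ i, 0 < K i)
    (β : AddCircle (1 : ℝ)) (d : ℝ) (hd : d < 1 / 6)
    (hS : ∀ (i : Fin R) (l : ℕ), 2 ^ l ≤ 8 * K i * R →
      ‖(m + 2 ^ l * (n i).natAbs) • β‖ ≤ d) :
    ∀ i, ‖n i • β‖ ≤ d / (K i * R) := by
  intro i
  obtain ⟨k, hKR_le, hpow_le⟩ :=
    Nat.exists_le_two_pow_le_two_mul (Nat.mul_pos (hK i) i.pos).ne'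
  have hbound : 2 ^ k * ‖(n i).natAbs • β‖ ≤ d :=
    AddCircle.pow_mul_norm_le_of_norm_add_two_pow_nsmul_le one_pos (γ := m • β) hd
      fun l hl => by
        have h2l : 2 ^ l ≤ 8 * K i * R := calc
          2 ^ l ≤ 2 ^ (k + 2) := Nat.pow_le_pow_right two_pos hl
          _ = 4 * 2 ^ k := by ring
          _ ≤ 8 * K i * R := by rw [mul_assoc]; omega
        simpa only [add_smul, mul_smul] using hS i l h2l
  have hKR_pos : (0 : ℝ) < K i * R := by exact_mod_cast Nat.mul_pos (hK i) i.pos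
  rw [← norm_natAbs_smul, le_div_iff₀ hKR_pos]
  calc ‖(n i).natAbs • β‖ * (K i * R) ≤ ‖(n i).natAbs • β‖ * 2 ^ k :=
        mul_le_mul_of_nonneg_left (by exact_mod_cast hKR_le) (norm_nonneg _)
    _ ≤ d := by linarith

/-- If `d < 1/6` bounds `‖nβ‖` for every `n` in
`S = {m + 2^l|n_i| : i ≤ R, 2^l ≤ 8K_iR}`, then `‖n_iβ‖ ≤ d/(K_iR)` for each `i`. -/
theorem stmt_17 (m : ℕ) (R : ℕ) (hRpos : 0 < R)
    (n : Fin R → ℤ) (hn : ∀ i, n i ≠ 0) (K : Fin R → ℕ) (hK : ∀ i, 0 < K i)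
    (β : AddCircle (1 : ℝ)) (d : ℝ) (hd0 : 0 ≤ d) (hd : d < 1 / 6)
    (hS : ∀ (i : Fin R) (l : ℕ), 2 ^ l ≤ 8 * K i * R →
      ‖(m + 2 ^ l * (n i).natAbs) • β‖ ≤ d) :
    ∀ i, ‖n i • β‖ ≤ d / (K i * R) :=
  stmt_17_general m R n K hK β d hd hS
end
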